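/- In the setting of the simple current extension, with f_{u} := f_{id}·π(u*) for a unitary u ∈ A, one has f_{u₂} f_{u₁} = π(σ^{-2}(σ(u₂*) u₁* u₂ σ(u₁))) · f_{u₁} f_{u₂}; in particular, if σ(u₂*) u₁* u₂ σ(u₁) = 1, then f_{u₁} and f_{u₂} commute. -/
import Mathlib

theorem simple_current_charged_field_commutation
    {A : Type*} [Ring A] [StarRing A] [Algebra ℂ A]
    {H₀ : Type*} [AddCommGroup H₀] [Module ℂ H₀]
    (ρ : A →ₐ[ℂ] Module.End ℂ H₀)
    (n : ℕ) [NeZero n]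
    (σ : A ≃ₐ[ℂ] A) (hσ : σ ^ n = 1)
    (π : A → (ZMod n → H₀) → (ZMod n → H₀))
    (hπ : ∀ a ξ p, π a ξ p = ρ ((σ ^ (p.val)) a) (ξ p))
    (f : (ZMod n → H₀) → (ZMod n → H₀))
    (hf : ∀ ξ p, f ξ p = ξ (p - 1))
    (u₁ u₂ : A)
    (hu₁ : star u₁ * u₁ = 1 ∧ u₁ * star u₁ = 1)
    (hu₂ : star u₂ * u₂ = 1 ∧ u₂ * star u₂ = 1)
    (fu : A → (ZMod n → H₀) → (ZMod n → H₀))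
    (hfu : ∀ u, fu u = f ∘ π (star u)) :
    fu u₂ ∘ fu u₁ =
      π (σ⁻¹ (σ⁻¹ (σ (star u₂) * star u₁ * u₂ * σ u₁))) ∘ (fu u₁ ∘ fu u₂) ∧
    (σ (star u₂) * star u₁ * u₂ * σ u₁ = 1 → fu u₁ ∘ fu u₂ = fu u₂ ∘ fu u₁) := by
  obtain ⟨hu₁l, hu₁r⟩ := hu₁
  obtain ⟨hu₂l, hu₂r⟩ := hu₂
  -- powers of σ depend only on exponent mod n
  have hmod : ∀ a b : ℕ, a % n = b % n → σ ^ a = σ ^ b := by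
    intro a b h
    have ha : σ ^ a = σ ^ (a % n) := by
      conv_lhs => rw [← Nat.mod_add_div a n]
      rw [pow_add, pow_mul, hσ, one_pow, mul_one]
    have hb : σ ^ b = σ ^ (b % n) := by
      conv_lhs => rw [← Nat.mod_add_div b n]
      rw [pow_add, pow_mul, hσ, one_pow, mul_one]
    rw [ha, hb, h]
  have hadd : ∀ (k : ZMod n) (m : ℕ), σ ^ ((k + (m : ZMod n)).val) = σ ^ k.val * σ ^ m := by
    intro k m
    rw [← pow_add]
    apply hmod
    rw [Nat.mod_eq_of_lt (ZMod.val_lt _), ZMod.val_add, ZMod.val_natCast]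
    conv_rhs => rw [Nat.add_mod]
    conv_lhs => rw [Nat.add_mod, Nat.mod_mod_of_dvd m dvd_rfl]
  have hval : ∀ u ξ p, fu u ξ p = ρ ((σ ^ ((p - 1).val)) (star u)) (ξ (p - 1)) := by
    intro u ξ p
    rw [hfu]
    simp only [Function.comp_apply, hf, hπ]
  have hcomp : ∀ (a b : A) (v : H₀), ρ a (ρ b v) = ρ (a * b) v := by
    intro a b v
    rw [map_mul]; rfl
  have h2 : ∀ x : A, (σ ^ 2) (σ⁻¹ (σ⁻¹ x)) = x := by
    intro x
    have hg : σ ^ 2 * σ⁻¹ * σ⁻¹ = 1 := by group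
    calc (σ ^ 2) (σ⁻¹ (σ⁻¹ x)) = (σ ^ 2 * σ⁻¹ * σ⁻¹) x := by
          rw [AlgEquiv.mul_apply, AlgEquiv.mul_apply]
      _ = x := by rw [hg]; rfl
  set ε := σ (star u₂) * star u₁ * u₂ * σ u₁ with hε
  have hkey : ε * (σ (star u₁) * star u₂) = σ (star u₂) * star u₁ := by
    have h1 : σ u₁ * σ (star u₁) = 1 := by rw [← map_mul, hu₁r, map_one]
    simp only [hε, mul_assoc]
    rw [← mul_assoc (σ u₁), h1, one_mul, hu₂r, mul_one]
  have main : fu u₂ ∘ fu u₁ = π (σ⁻¹ (σ⁻¹ ε)) ∘ (fu u₁ ∘ fu u₂) := by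
    funext ξ p
    simp only [Function.comp_apply, hval, hπ]
    have hq : p - 1 - 1 = p - 2 := by ring
    rw [hq]
    set q := p - 2 with hqdef
    have e1 : σ ^ ((p - 1).val) = σ ^ q.val * σ := by
      have : p - 1 = q + ((1 : ℕ) : ZMod n) := by push_cast; ring
      rw [this, hadd, pow_one]
    have e2 : σ ^ (p.val) = σ ^ q.val * σ ^ 2 := by
      have : p = q + ((2 : ℕ) : ZMod n) := by push_cast; ring
      rw [this, hadd]
    simp only [hcomp, e1, e2, AlgEquiv.mul_apply, h2]
    congr 1
    rw [← map_mul, ← map_mul, ← map_mul, hkey]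
  refine ⟨main, fun h1 => ?_⟩
  have : π (σ⁻¹ (σ⁻¹ ε)) = id := by
    funext ξ p
    rw [h1]
    simp [hπ, map_one]
  rw [main, this]
  rfl
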